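/- arXiv:2105.01947 — 9 statements merged into one kernel-verified Lean document; each statement's English description precedes it below -/
import Mathlib

section
/- Let φ : A → B be a flat epimorphism of commutative rings and let q be a prime ideal of B with p = φ⁻¹(q). Then the induced homomorphism of residue fields κ(p) → κ(q) is an isomorphism (bijective). -/
/-!
Localizing a flat epimorphism `A → B` at `q` and `p = φ⁻¹(q)` gives a flat epimorphism
`A_p → B_q`, which is a local homomorphism of local rings and hence faithfully flat.
A faithfully flat epimorphism `R → S` is surjective: in `S ⊗[R] (S ⧸ R)` one has
`1 ⊗ s̄ = s ⊗ 1̄ = 0`, and `M → S ⊗[R] M` is injective. Surjectivity of `A_p → B_q`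
then passes to the residue fields.
-/

open CategoryTheory TensorProduct

universe u

theorem CommRingCat.epi_ofHom_of_cancel {A B : Type u} [CommRing A] [CommRing B] (φ : A →+* B)
    (hepi : ∀ (C : Type u) [CommRing C] (g h : B →+* C), g.comp φ = h.comp φ → g = h) :
    Epi (CommRingCat.ofHom φ) :=
  ⟨fun g h e => hom_ext (hepi _ g.hom h.hom congr(($e).hom))⟩

instance Localization.epi_localRingHom {A B : Type u} [CommRing A] [CommRing B] (φ : A →+* B)
    [Epi (CommRingCat.ofHom φ)] (q : Ideal B) [q.IsPrime] :
    Epi (CommRingCat.ofHom (Localization.localRingHom (q.comap φ) q φ rfl)) := by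
  have hcomm : CommRingCat.ofHom (algebraMap A (Localization.AtPrime (q.comap φ))) ≫
        CommRingCat.ofHom (Localization.localRingHom (q.comap φ) q φ rfl) =
      CommRingCat.ofHom φ ≫ CommRingCat.ofHom (algebraMap B (Localization.AtPrime q)) := by
    ext a
    exact Localization.localRingHom_to_map _ q φ rfl a
  exact epi_of_epi_fac hcomm

theorem Algebra.IsEpi.surjective_algebraMap_of_faithfullyFlat {R S : Type*} [CommRing R]
    [CommRing S] [Algebra R S] [Algebra.IsEpi R S] [Module.FaithfullyFlat R S] :
    Function.Surjective (algebraMap R S) := by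
  intro s
  set N := LinearMap.range (Algebra.linearMap R S)
  have h1 : N.mkQ 1 = 0 := (Submodule.Quotient.mk_eq_zero N).mpr ⟨1, map_one (algebraMap R S)⟩
  have hs : N.mkQ s = 0 := by
    apply Module.FaithfullyFlat.tensorProduct_mk_injective (A := R) (B := S) (S ⧸ N)
    calc (1 : S) ⊗ₜ N.mkQ s = N.mkQ.lTensor S (1 ⊗ₜ s) := rfl
      _ = N.mkQ.lTensor S (s ⊗ₜ 1) := by rw [(Algebra.isEpi_iff_forall_one_tmul_eq R S).mp ‹_› s]
      _ = TensorProduct.mk R S (S ⧸ N) 1 0 := by simp [h1]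
  exact (Submodule.Quotient.mk_eq_zero N).mp hs

theorem IsLocalRing.surjective_of_flat_of_epi {R S : Type u} [CommRing R] [CommRing S]
    [IsLocalRing R] [IsLocalRing S] (f : R →+* S) [IsLocalHom f] (hflat : f.Flat)
    [Epi (CommRingCat.ofHom f)] : Function.Surjective f := by
  algebraize [f]
  have : Algebra.IsEpi R S := CommRingCat.epi_iff_epi.mp ‹_›
  have : Module.FaithfullyFlat R S := .of_flat_of_isLocalHom
  exact Algebra.IsEpi.surjective_algebraMap_of_faithfullyFlat

theorem IsLocalRing.ResidueField.map_bijective_of_surjective {R S : Type*} [CommRing R]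
    [CommRing S] [IsLocalRing R] [IsLocalRing S] {f : R →+* S} [IsLocalHom f]
    (hf : Function.Surjective f) : Function.Bijective (ResidueField.map f) := by
  refine ⟨(ResidueField.map f).injective, fun y => ?_⟩
  obtain ⟨s, rfl⟩ := residue_surjective y
  obtain ⟨r, rfl⟩ := hf s
  exact ⟨residue R r, ResidueField.map_residue f r⟩

/-- If `φ : A → B` is a flat epimorphism of commutative rings and `q` is a prime ideal of
`B` with `p = φ⁻¹(q)`, then the induced homomorphism of residue fields `κ(p) → κ(q)` is
bijective. -/
theorem stmt2 {A B : Type} [CommRing A] [CommRing B] (φ : A →+* B)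
    (hflat : φ.Flat)
    (hepi : ∀ (C : Type) [CommRing C] (g h : B →+* C), g.comp φ = h.comp φ → g = h)
    (q : Ideal B) [q.IsPrime] :
    Function.Bijective
      (IsLocalRing.ResidueField.map (Localization.localRingHom (q.comap φ) q φ rfl)) := by
  have : Epi (CommRingCat.ofHom φ) := CommRingCat.epi_ofHom_of_cancel φ hepi
  exact IsLocalRing.ResidueField.map_bijective_of_surjective <|
    IsLocalRing.surjective_of_flat_of_epi _ (hflat.localRingHom q _ rfl)
end

section
/- Let φ : A → B be a flat epimorphism of commutative rings, M an A-module, and q a prime ideal of B with p = φ⁻¹(q). Then the natural map M_p → (M ⊗_A B)_q, from the localization of M at p to the localization of the B-module M ⊗_A B at q, is bijective. -/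
/-!
Write `p = φ⁻¹(q)`. The induced map `A_p → B_q` is a flat local homomorphism of local rings, hence
faithfully flat, and it is an epimorphism because `A → A_p → B_q` equals the epimorphism
`A → B → B_q`. A faithfully flat epimorphism `R → S` is bijective, since `S → S ⊗_R S` is.
So `B_q` is the localization of `A` at `p`, and `m ↦ 1 ⊗ m / 1`, being the base change of `M`
along `A → B_q`, exhibits `(B ⊗_A M)_q` as the localization of `M` at `p`.
-/

open scoped TensorProduct

universe u

def RingHom.IsEpi {R S : Type u} [CommRing R] [CommRing S] (f : R →+* S) : Prop :=
  ∀ (C : Type u) [CommRing C] (g h : S →+* C), g.comp f = h.comp f → g = h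

namespace RingHom.IsEpi

variable {R S T : Type u} [CommRing R] [CommRing S] [CommRing T]

theorem comp {g : S →+* T} {f : R →+* S} (hg : g.IsEpi) (hf : f.IsEpi) : (g.comp f).IsEpi :=
  fun C _ h₁ h₂ h => hg C h₁ h₂ (hf C _ _ (by simpa only [RingHom.comp_assoc] using h))

theorem of_comp {g : S →+* T} {f : R →+* S} (h : (g.comp f).IsEpi) : g.IsEpi :=
  fun C _ h₁ h₂ e => h C h₁ h₂ (by rw [← RingHom.comp_assoc, e, RingHom.comp_assoc])

theorem of_isLocalization (M : Submonoid R) [Algebra R S] [IsLocalization M S] :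
    (algebraMap R S).IsEpi :=
  fun _ _ _ _ e => IsLocalization.ringHom_ext M e

theorem bijective_algebraMap_tensorProduct [Algebra R S] (h : (algebraMap R S).IsEpi) :
    Function.Bijective (algebraMap S (S ⊗[R] S)) := by
  have htmul_comm : ∀ s : S, s ⊗ₜ[R] (1 : S) = 1 ⊗ₜ s := fun s =>
    RingHom.congr_fun (h (S ⊗[R] S) Algebra.TensorProduct.includeLeftRingHom
      Algebra.TensorProduct.includeRight.toRingHom (by
        ext r
        change algebraMap R S r ⊗ₜ[R] (1 : S) = 1 ⊗ₜ algebraMap R S r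
        rw [Algebra.algebraMap_eq_smul_one, TensorProduct.smul_tmul])) s
  refine ⟨fun x y hxy => ?_, fun z => ?_⟩
  · simpa using congrArg (Algebra.TensorProduct.lmul' R (S := S)) hxy
  · induction z using TensorProduct.induction_on with
    | zero => exact ⟨0, map_zero _⟩
    | tmul s t =>
      refine ⟨s * t, ?_⟩
      rw [Algebra.TensorProduct.algebraMap_apply, Algebra.algebraMap_self, RingHom.id_apply]
      calc (s * t) ⊗ₜ[R] (1 : S) = s ⊗ₜ 1 * t ⊗ₜ 1 := by
            rw [Algebra.TensorProduct.tmul_mul_tmul, mul_one]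
        _ = s ⊗ₜ 1 * 1 ⊗ₜ t := by rw [htmul_comm t]
        _ = s ⊗ₜ t := by rw [Algebra.TensorProduct.tmul_mul_tmul, mul_one, one_mul]
    | add x y hx hy =>
      obtain ⟨a, rfl⟩ := hx
      obtain ⟨b, rfl⟩ := hy
      exact ⟨a + b, map_add _ a b⟩

theorem bijective_of_faithfullyFlat [Algebra R S] [Module.FaithfullyFlat R S]
    (h : (algebraMap R S).IsEpi) : Function.Bijective (algebraMap R S) :=
  Module.FaithfullyFlat.bijective_of_tensorProduct h.bijective_algebraMap_tensorProduct

end RingHom.IsEpi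

theorem isLocalization_atPrime_of_flat_of_isEpi {A B : Type u} [CommRing A] [CommRing B]
    [Algebra A B] [Module.Flat A B] (hepi : (algebraMap A B).IsEpi)
    (p : Ideal A) [p.IsPrime] (q : Ideal B) [q.IsPrime] [q.LiesOver p] :
    IsLocalization p.primeCompl (Localization.AtPrime q) := by
  let := Localization.AtPrime.algebraOfLiesOver p q
  have : IsLocalHom (algebraMap (Localization.AtPrime p) (Localization.AtPrime q)) :=
    Localization.isLocalHom_localRingHom p q _ Ideal.LiesOver.over
  have : Module.FaithfullyFlat (Localization.AtPrime p) (Localization.AtPrime q) :=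
    .of_flat_of_isLocalHom
  have hepi' : (algebraMap (Localization.AtPrime p) (Localization.AtPrime q)).IsEpi := by
    refine RingHom.IsEpi.of_comp (f := algebraMap A (Localization.AtPrime p)) ?_
    rw [← IsScalarTower.algebraMap_eq, IsScalarTower.algebraMap_eq A B]
    exact (RingHom.IsEpi.of_isLocalization q.primeCompl).comp hepi
  exact IsLocalization.isLocalization_of_algEquiv p.primeCompl
    (AlgEquiv.ofBijective (IsScalarTower.toAlgHom A _ _) hepi'.bijective_of_faithfullyFlat)

theorem isLocalizedModule_localizedModule_tensorProduct {A B : Type*} [CommRing A] [CommRing B]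
    [Algebra A B] (S : Submonoid A) (T : Submonoid B) [IsLocalization S (Localization T)]
    (M : Type*) [AddCommGroup M] [Module A M] :
    IsLocalizedModule S ((LocalizedModule.mkLinearMap T (B ⊗[A] M)).restrictScalars A ∘ₗ
      TensorProduct.mk A B M 1) :=
  (isLocalizedModule_iff_isBaseChange S (Localization T) _).mpr
    ((TensorProduct.isBaseChange A M B).comp (LocalizedModule.isBaseChange T _))

/-- If `φ : A → B` is a flat epimorphism of commutative rings, `M` an `A`-module and `q` a
prime ideal of `B` with `p = φ⁻¹(q)`, then the natural map `M_p → (M ⊗_A B)_q` (from the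
localization of `M` at `p` to the localization of the `B`-module `M ⊗_A B = B ⊗[A] M` at
`q`) is bijective.  The natural map is characterized as the unique additive,
`A`-semilinear map sending the class of `m` to the class of `1 ⊗ m`. -/
theorem stmt3 {A B : Type} [CommRing A] [CommRing B] [Algebra A B]
    (hflat : Module.Flat A B)
    (hepi : ∀ (C : Type) [CommRing C] (g h : B →+* C),
      g.comp (algebraMap A B) = h.comp (algebraMap A B) → g = h)
    (M : Type) [AddCommGroup M] [Module A M]
    (q : Ideal B) [q.IsPrime] :
    ∃ g : LocalizedModule (q.comap (algebraMap A B)).primeCompl M →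
        LocalizedModule q.primeCompl (B ⊗[A] M),
      Function.Bijective g ∧
      (∀ x y, g (x + y) = g x + g y) ∧
      (∀ (a : A) x, g (a • x) = algebraMap A B a • g x) ∧
      (∀ m : M, g (LocalizedModule.mk m 1) = LocalizedModule.mk (1 ⊗ₜ m) 1) := by
  have : q.LiesOver (q.comap (algebraMap A B)) := ⟨rfl⟩
  have := isLocalization_atPrime_of_flat_of_isEpi hepi (q.comap (algebraMap A B)) q
  have := isLocalizedModule_localizedModule_tensorProduct
    (q.comap (algebraMap A B)).primeCompl q.primeCompl M
  let g := IsLocalizedModule.iso (q.comap (algebraMap A B)).primeCompl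
    ((LocalizedModule.mkLinearMap q.primeCompl (B ⊗[A] M)).restrictScalars A ∘ₗ
      TensorProduct.mk A B M 1)
  exact ⟨g, g.bijective, map_add g, fun a x => by rw [map_smul, algebraMap_smul],
    IsLocalizedModule.iso_mk_one _ _⟩
end

section
/- Let k be a field and A a commutative k-algebra that is finite-dimensional as a k-vector space, and let k̄ be an algebraic closure of k. The following are equivalent: (i) A is an étale k-algebra; (ii) A is isomorphic as a k-algebra to a finite product ∏_{i∈I} K_i where each K_i is a finite separable field extension of k; (iii) the ring A ⊗_k k̄ is reduced; (iv) A ⊗_k k̄ is isomorphic as a k̄-algebra to a finite product of copies of k̄, namely k̄^{dim_k A}. -/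
/-! Over the perfect field `K`, a reduced finite algebra is a product of finite (hence separable)
field extensions, so it is étale; étaleness then descends from `K ⊗[k] A` to `A` because `K` is
faithfully flat over `k`. Conversely an étale algebra over the separably closed `K` is a product
of copies of `K`, and counting dimensions fixes the number of factors. -/

open scoped TensorProduct

theorem Algebra.Etale.iff_exists_algEquiv_pi_fin {k : Type*} {A : Type} [Field k] [CommRing A]
    [Algebra k A] :
    Algebra.Etale k A ↔
      ∃ (n : ℕ) (L : Fin n → Type) (_ : ∀ i, Field (L i)) (_ : ∀ i, Algebra k (L i)),
        (∀ i, FiniteDimensional k (L i)) ∧ (∀ i, Algebra.IsSeparable k (L i)) ∧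
          Nonempty (A ≃ₐ[k] ((i : Fin n) → L i)) := by
  rw [Algebra.Etale.iff_exists_algEquiv_prod]
  constructor
  · rintro ⟨I, _, L, _, _, e, hL⟩
    let σ := Finite.equivFin I
    exact ⟨Nat.card I, fun j ↦ L (σ.symm j), fun _ ↦ inferInstance, fun _ ↦ inferInstance,
      fun j ↦ (hL _).1, fun j ↦ (hL _).2, ⟨e.trans (AlgEquiv.piCongrLeft' k L σ)⟩⟩
  · rintro ⟨n, L, _, _, hfin, hsep, ⟨e⟩⟩
    exact ⟨Fin n, inferInstance, L, _, _, e, fun i ↦ ⟨hfin i, hsep i⟩⟩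

theorem Algebra.Etale.of_isReduced_of_perfectField (K A : Type*) [Field K] [PerfectField K]
    [CommRing A] [Algebra K A] [Module.Finite K A] [IsReduced A] : Algebra.Etale K A := by
  have : IsArtinianRing A := .of_finite K A
  let (m : MaximalSpectrum A) : Field (A ⧸ m.asIdeal) := Ideal.Quotient.field m.asIdeal
  refine (Algebra.Etale.iff_exists_algEquiv_prod K A).mpr
    ⟨_, inferInstance, _, _, _, (IsArtinianRing.equivPi A).restrictScalars K, fun m ↦ ?_⟩
  have : Module.Finite K (A ⧸ m.asIdeal) :=
    .of_surjective (Ideal.Quotient.mkₐ K m.asIdeal).toLinearMap Ideal.Quotient.mk_surjective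
  exact ⟨this, inferInstance⟩

theorem AlgEquiv.nonempty_algEquiv_pi_fin_finrank {K B ι : Type*} [Field K] [Ring B]
    [Algebra K B] [Finite ι] (e : B ≃ₐ[K] (ι → K)) :
    Nonempty (B ≃ₐ[K] (Fin (Module.finrank K B) → K)) := by
  have : Fintype ι := .ofFinite ι
  have hcard : Fintype.card ι = Module.finrank K B := by
    rw [e.toLinearEquiv.finrank_eq, Module.finrank_fintype_fun_eq_card]
  exact ⟨e.trans (AlgEquiv.piCongrLeft' K (fun _ ↦ K) (Fintype.equivFinOfCardEq hcard))⟩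

/-- For a field `k`, a commutative `k`-algebra `A` that is finite dimensional as a
`k`-vector space, and an algebraic closure `K` of `k`, the following are equivalent:
(i) `A` is étale over `k`;
(ii) `A` is isomorphic as a `k`-algebra to a finite product of finite separable field
extensions of `k`;
(iii) `A ⊗_k K` is reduced;
(iv) `A ⊗_k K` is isomorphic as a `K`-algebra to `K^{dim_k A}`. -/
theorem stmt5 {k A K : Type} [Field k] [CommRing A] [Algebra k A]
    [FiniteDimensional k A] [Field K] [Algebra k K] [IsAlgClosure k K] :
    List.TFAE
      [Algebra.Etale k A,
        ∃ (n : ℕ) (L : Fin n → Type) (_ : ∀ i, Field (L i)) (_ : ∀ i, Algebra k (L i)),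
          (∀ i, FiniteDimensional k (L i)) ∧ (∀ i, Algebra.IsSeparable k (L i)) ∧
            Nonempty (A ≃ₐ[k] ((i : Fin n) → L i)),
        IsReduced (K ⊗[k] A),
        Nonempty ((K ⊗[k] A) ≃ₐ[K] (Fin (Module.finrank k A) → K))] := by
  have : IsAlgClosed K := IsAlgClosure.isAlgClosed k
  tfae_have 1 ↔ 2 := Algebra.Etale.iff_exists_algEquiv_pi_fin
  tfae_have 1 → 4 := fun _ ↦ by
    have : IsArtinianRing (K ⊗[k] A) := .of_finite K _
    rw [← Module.finrank_baseChange (R := K)]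
    exact AlgEquiv.nonempty_algEquiv_pi_fin_finrank
      (Algebra.FormallyEtale.equivPiOfIsSepClosed K (K ⊗[k] A))
  tfae_have 4 → 3 := fun ⟨e⟩ ↦ isReduced_of_injective e e.injective
  tfae_have 3 → 1 := fun _ ↦
    have : Algebra.Etale K (K ⊗[k] A) := .of_isReduced_of_perfectField K _
    .of_etale_tensorProduct_of_faithfullyFlat K
  tfae_finish
end

section
/- Let R be a nontrivial commutative ring whose only idempotent elements are 0 and 1, and let F and E be finite types. Then every R-algebra homomorphism f from the product R-algebra F → R (functions from F to R with pointwise operations) to the product R-algebra E → R is induced by composition with some map φ : E → F; that is, there exists φ : E → F such that f(a) = a ∘ φ for every a : F → R. -/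
/-! The indicator functions `Pi.single x 1` form a complete family of orthogonal idempotents in
`F → R`, and an algebra homomorphism `(F → R) →ₐ[R] R` maps it to such a family in `R`. When `R` is
connected, exactly one member of that family is `1` and the others vanish, so the homomorphism
is evaluation at that point; applying this to every coordinate of `E → R` yields `φ`. -/

theorem CompleteOrthogonalIdempotents.exists_eq_single_one {R I : Type*} [Semiring R]
    [Nontrivial R] [Fintype I] [DecidableEq I]
    (hid : ∀ e : R, IsIdempotentElem e → e = 0 ∨ e = 1) {e : I → R}
    (he : CompleteOrthogonalIdempotents e) : ∃ i, e = Pi.single i 1 := by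
  obtain ⟨i, hi⟩ : ∃ i, e i = 1 := by
    by_contra! hne
    have hzero : ∀ i, e i = 0 := fun i => (hid _ (he.idem i)).resolve_right (hne i)
    simpa [hzero] using he.complete
  refine ⟨i, funext fun j => ?_⟩
  rcases eq_or_ne j i with rfl | hji
  · simp [hi]
  · simpa [hi, hji] using he.ortho hji.symm

theorem AlgHom.exists_eq_eval_of_isIdempotentElem {R F : Type*} [CommRing R] [Nontrivial R]
    [_root_.Finite F] (hid : ∀ e : R, IsIdempotentElem e → e = 0 ∨ e = 1) (g : (F → R) →ₐ[R] R) :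
    ∃ x : F, ∀ a : F → R, g a = a x := by
  have := Fintype.ofFinite F
  classical
  obtain ⟨x, hx⟩ := ((CompleteOrthogonalIdempotents.single fun _ : F => R).map
    g.toRingHom).exists_eq_single_one hid
  refine ⟨x, fun a => ?_⟩
  have hsingle (y : F) : g (Pi.single y 1) = (Pi.single x 1 : F → R) y := congrFun hx y
  calc g a = ∑ y, a y • g (Pi.single y 1) := by
        conv_lhs => rw [← Finset.univ_sum_single a]
        rw [map_sum]
        refine Finset.sum_congr rfl fun y _ => ?_
        rw [← map_smul, ← Pi.single_smul', smul_eq_mul, mul_one]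
    _ = a x := by simp [hsingle, Pi.single_apply]

theorem stmt11_general {R : Type} [CommRing R] [Nontrivial R]
    (hid : ∀ e : R, IsIdempotentElem e → e = 0 ∨ e = 1)
    (F E : Type) [Finite F]
    (f : (F → R) →ₐ[R] (E → R)) :
    ∃ φ : E → F, ∀ a : F → R, f a = a ∘ φ := by
  choose φ hφ using fun e : E =>
    ((Pi.evalAlgHom R (fun _ => R) e).comp f).exists_eq_eval_of_isIdempotentElem hid
  exact ⟨φ, fun a => funext fun e => hφ e a⟩

/-- Let `R` be a nontrivial commutative ring whose only idempotents are `0` and `1`, and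
let `F` and `E` be finite types.  Every `R`-algebra homomorphism `(F → R) →ₐ[R] (E → R)`
between the product `R`-algebras is induced by composition with some map `φ : E → F`. -/
theorem stmt11 {R : Type} [CommRing R] [Nontrivial R]
    (hid : ∀ e : R, IsIdempotentElem e → e = 0 ∨ e = 1)
    (F E : Type) [Finite F] [Finite E]
    (f : (F → R) →ₐ[R] (E → R)) :
    ∃ φ : E → F, ∀ a : F → R, f a = a ∘ φ :=
  stmt11_general hid F E f
end

section
/- Let J be a nonempty connected small category and F : J ⥤ Top a functor to topological spaces such that for every object j of J the space F(j) is connected (in particular nonempty). Then the colimit of F in the category of topological spaces is a connected topological space. -/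
open CategoryTheory
open CategoryTheory.Limits

/-! The images of the colimit injections are connected and cover the colimit, and the images
of `j` and `k` meet whenever there is a morphism `j ⟶ k`; along zigzags in the connected
category `J` these connected pieces chain together into the whole colimit. -/

theorem IsPreconnected.iUnion_of_isPreconnected_category {X : Type*} [TopologicalSpace X]
    {J : Type*} [Category J] [CategoryTheory.IsPreconnected J] {s : J → Set X}
    (hs : ∀ j, IsPreconnected (s j)) (hinter : ∀ ⦃j k : J⦄, (j ⟶ k) → (s j ∩ s k).Nonempty) :
    IsPreconnected (⋃ j, s j) :=
  IsPreconnected.iUnion_of_reflTransGen hs fun j k =>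
    Relation.ReflTransGen.mono
      (fun _ _ zag => by
        rcases zag with ⟨⟨f⟩⟩ | ⟨⟨f⟩⟩
        exacts [hinter f, Set.inter_comm _ _ ▸ hinter f])
      _ _ (isPreconnected_zigzag j k)

namespace TopCat

variable {J : Type*} [Category J] {F : J ⥤ TopCat} (c : Cocone F)

theorem range_ι_inter_range_ι_nonempty {j k : J} (f : j ⟶ k) [Nonempty (F.obj j)] :
    ((Set.range (c.ι.app j) : Set c.pt) ∩ (Set.range (c.ι.app k) : Set c.pt)).Nonempty := by
  obtain ⟨x⟩ := ‹Nonempty (F.obj j)›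
  exact ⟨c.ι.app j x, ⟨x, rfl⟩, F.map f x, by rw [← ConcreteCategory.comp_apply, c.w f]⟩

theorem iUnion_range_ι_eq_univ {c : Cocone F} (hc : IsColimit c) :
    ⋃ j, (Set.range (c.ι.app j) : Set c.pt) = Set.univ :=
  Set.eq_univ_of_forall fun x => Set.mem_iUnion.2 <|
    Types.jointly_surjective_of_isColimit (isColimitOfPreserves (forget TopCat) hc) x

theorem connectedSpace_of_isColimit [CategoryTheory.IsConnected J]
    [∀ j, ConnectedSpace (F.obj j)] {c : Cocone F} (hc : IsColimit c) : ConnectedSpace c.pt := by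
  have hpre : _root_.IsPreconnected (⋃ j, (Set.range (c.ι.app j) : Set c.pt)) :=
    IsPreconnected.iUnion_of_isPreconnected_category
      (fun j => isPreconnected_range (c.ι.app j).hom.continuous)
      fun _ _ f => range_ι_inter_range_ι_nonempty c f
  rw [iUnion_range_ι_eq_univ hc] at hpre
  obtain ⟨j⟩ : Nonempty J := inferInstance
  obtain ⟨x⟩ : Nonempty (F.obj j) := inferInstance
  exact { isPreconnected_univ := hpre, toNonempty := ⟨c.ι.app j x⟩ }

end TopCat

/-- Let `J` be a nonempty connected small category and `F : J ⥤ Top` a functor such that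
every `F(j)` is a connected topological space.  Then the colimit of `F` in `Top` is a
connected topological space. -/
theorem stmt12 {J : Type} [SmallCategory J] [IsConnected J]
    (F : J ⥤ TopCat.{0}) (h : ∀ j : J, ConnectedSpace (F.obj j)) :
    ConnectedSpace ↥(CategoryTheory.Limits.colimit F) :=
  TopCat.connectedSpace_of_isColimit (colimit.isColimit F)
end

section
/- Let A be a commutative ring, B a commutative A-algebra, G a finite group acting on B by A-algebra automorphisms, and C a flat commutative A-algebra. Let G act on B ⊗_A C through the first factor. Then the natural map (B^G) ⊗_A C → (B ⊗_A C)^G is bijective, where B^G denotes the subalgebra of G-invariant elements of B. -/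
/-!
The invariants `B^G` are the kernel of `b ↦ (g • b - b)_{g ∈ G} : B → ∏_G B`. Tensoring with the
flat module `C` preserves this kernel and the injectivity of `B^G → B`, and since `G` is finite,
`(∏_G B) ⊗ C = ∏_G (B ⊗ C)`, so the kernel after base change is again the set of `G`-invariants.
-/

open scoped TensorProduct

/-- The subalgebra of invariants of an action of a group `G` on an `A`-algebra `B` by
`A`-algebra automorphisms, the action being given by `ρ : G →* (B ≃ₐ[A] B)`. -/
def fixedSubalgebra {A B G : Type} [CommRing A] [CommRing B] [Algebra A B] [Group G]
    (ρ : G →* (B ≃ₐ[A] B)) : Subalgebra A B where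
  carrier := {b | ∀ g : G, ρ g b = b}
  mul_mem' := by intro a b ha hb g; rw [map_mul, ha g, hb g]
  one_mem' := by intro g; rw [map_one]
  add_mem' := by intro a b ha hb g; rw [map_add, ha g, hb g]
  zero_mem' := by intro g; rw [map_zero]
  algebraMap_mem' := by intro r g; exact (ρ g).commutes r

open TensorProduct LinearMap

section

variable {R M C ι : Type*} [CommSemiring R] [AddCommMonoid M] [Module R M]
  [AddCommMonoid C] [Module R C] {N : ι → Type*} [∀ i, AddCommMonoid (N i)] [∀ i, Module R (N i)]

lemma LinearMap.piLeft_comp_rTensor_pi [Fintype ι] [DecidableEq ι] (f : ∀ i, M →ₗ[R] N i) :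
    (piLeft R C N).toLinearMap ∘ₗ (LinearMap.pi f).rTensor C =
      LinearMap.pi fun i ↦ (f i).rTensor C := by
  ext m c i
  simp

lemma LinearMap.ker_rTensor_pi [Finite ι] (f : ∀ i, M →ₗ[R] N i) :
    ker ((LinearMap.pi f).rTensor C) = ⨅ i, ker ((f i).rTensor C) := by
  have := Fintype.ofFinite ι
  classical
  rw [← LinearEquiv.ker_comp (piLeft R C N), piLeft_comp_rTensor_pi, ker_pi]

end

section

variable {R M C ι : Type*} [CommRing R] [AddCommGroup M] [Module R M]
  [AddCommGroup C] [Module R C] [Module.Flat R C] [Finite ι]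

lemma Module.Flat.range_rTensor_subtype_iInf_ker {N : ι → Type*} [∀ i, AddCommGroup (N i)]
    [∀ i, Module R (N i)] (f : ∀ i, M →ₗ[R] N i) :
    range ((⨅ i, ker (f i)).subtype.rTensor C) = ⨅ i, ker ((f i).rTensor C) := by
  rw [← ker_rTensor_pi, ← ker_pi]
  exact (rTensor_exact C (exact_subtype_ker_map _)).linearMap_ker_eq.symm

lemma Module.Flat.coe_range_rTensor_subtype_of_mem_iff_forall_eq (σ : ι → Module.End R M)
    (p : Submodule R M) (hp : ∀ m, m ∈ p ↔ ∀ i, σ i m = m) :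
    (range (p.subtype.rTensor C) : Set (M ⊗[R] C)) = {x | ∀ i, (σ i).rTensor C x = x} := by
  obtain rfl : p = ⨅ i, ker (σ i - 1) := by
    ext m
    simp [hp, sub_eq_zero]
  ext x
  simp [range_rTensor_subtype_iInf_ker, rTensor_sub, sub_eq_zero, Module.End.one_eq_id]

end

lemma Algebra.TensorProduct.toLinearMap_map_id_right {R A B C : Type*} [CommSemiring R]
    [Semiring A] [Algebra R A] [Semiring B] [Algebra R B] [Semiring C] [Algebra R C]
    (f : A →ₐ[R] B) :
    (Algebra.TensorProduct.map f (AlgHom.id R C)).toLinearMap = f.toLinearMap.rTensor C := by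
  ext; rfl

/-- Let `A` be a commutative ring, `B` a commutative `A`-algebra, `G` a finite group acting
on `B` by `A`-algebra automorphisms, and `C` a flat commutative `A`-algebra, with `G`
acting on `B ⊗_A C` through the first factor.  Then the natural map
`B^G ⊗_A C → (B ⊗_A C)^G` is bijective; equivalently, the canonical map
`B^G ⊗_A C → B ⊗_A C` is injective with image exactly the `G`-invariants of `B ⊗_A C`. -/
theorem stmt13 {A B C G : Type} [CommRing A] [CommRing B] [Algebra A B]
    [CommRing C] [Algebra A C] [Group G] [Finite G]
    (ρ : G →* (B ≃ₐ[A] B)) (hC : Module.Flat A C) :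
    Function.Injective
        ⇑(Algebra.TensorProduct.map (fixedSubalgebra ρ).val (AlgHom.id A C)) ∧
      Set.range ⇑(Algebra.TensorProduct.map (fixedSubalgebra ρ).val (AlgHom.id A C)) =
        {x : B ⊗[A] C | ∀ g : G,
          Algebra.TensorProduct.map (ρ g).toAlgHom (AlgHom.id A C) x = x} := by
  simp only [← AlgHom.coe_toLinearMap, Algebra.TensorProduct.toLinearMap_map_id_right]
  refine ⟨Module.Flat.rTensor_preserves_injective_linearMap _ Subtype.val_injective, ?_⟩
  rw [← coe_range]
  exact Module.Flat.coe_range_rTensor_subtype_of_mem_iff_forall_eq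
    (fun g ↦ (ρ g).toAlgHom.toLinearMap) (Subalgebra.toSubmodule (fixedSubalgebra ρ))
    fun _ ↦ Iff.rfl
end

section
/- Let φ : A → B be a homomorphism of commutative rings such that B is finitely generated as an A-module (φ is finite) and φ is an epimorphism in the category of commutative rings. Then φ is surjective. -/
/-!
Applying the epimorphism property to the two coprojections `B → B ⊗[A] B` gives
`1 ⊗ b = b ⊗ 1` for every `b`, i.e. `B` is an epi `A`-algebra. For the finite `A`-module
`M = B ⧸ φ(A)` this kills `M ⊗[A] M`, since `x ⊗ y = 1 ⊗ xy` and `1 ∈ φ(A)`; a nonzero finite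
module has nonzero tensor square, so `M = 0`.
-/

open TensorProduct

theorem RingHom.isEpi_of_comp_eq_imp_eq {A B : Type} [CommRing A] [CommRing B] (φ : A →+* B)
    (hepi : ∀ (C : Type) [CommRing C] (g h : B →+* C), g.comp φ = h.comp φ → g = h) :
    letI := φ.toAlgebra; Algebra.IsEpi A B := by
  let := φ.toAlgebra
  refine (Algebra.isEpi_iff_forall_one_tmul_eq A B).mpr fun b ↦ ?_
  have hcoproj : (Algebra.TensorProduct.includeRight : B →ₐ[A] B ⊗[A] B).toRingHom =
      Algebra.TensorProduct.includeLeftRingHom :=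
    hepi _ _ _ <| RingHom.ext fun a ↦ by
      change 1 ⊗ₜ[A] algebraMap A B a = algebraMap A B a ⊗ₜ[A] 1
      simp only [Algebra.algebraMap_eq_smul_one, smul_tmul]
  exact RingHom.congr_fun hcoproj b

/-- A ring homomorphism `φ : A → B` that is finite (i.e. `B` is finitely generated as an
`A`-module) and is an epimorphism in the category of commutative rings is surjective. -/
theorem stmt14 {A B : Type} [CommRing A] [CommRing B] (φ : A →+* B)
    (hfin : φ.Finite)
    (hepi : ∀ (C : Type) [CommRing C] (g h : B →+* C), g.comp φ = h.comp φ → g = h) :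
    Function.Surjective φ := by
  algebraize [φ]
  have := φ.isEpi_of_comp_eq_imp_eq hepi
  exact Algebra.isEpi_iff_surjective_algebraMap_of_finite.mp ‹_›
end

section
/- Let R be a Noetherian commutative ring and A a commutative R-algebra. Suppose there exist a natural number n and an R-algebra B that is finitely generated as an R-module and faithfully flat over R, together with an isomorphism of B-algebras A ⊗_R B ≅ B^n. Then A is a finite étale R-algebra. -/
open scoped TensorProduct

theorem stmt17_general {R A B : Type} [CommRing R] [CommRing A] [Algebra R A]
    [CommRing B] [Algebra R B] (n : ℕ)
    (hff : Module.FaithfullyFlat R B)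
    (e : (B ⊗[R] A) ≃ₐ[B] (Fin n → B)) :
    Algebra.Etale R A ∧ Module.Finite R A := by
  have : Algebra.Etale B (B ⊗[R] A) := .of_equiv e.symm
  have : Module.Finite B (B ⊗[R] A) := .equiv e.symm.toLinearEquiv
  exact ⟨.of_etale_tensorProduct_of_faithfullyFlat B,
    .of_finite_tensorProduct_of_faithfullyFlat B⟩

/-- Let `R` be a Noetherian commutative ring and `A` a commutative `R`-algebra.  If there
exist `n : ℕ` and an `R`-algebra `B`, finitely generated as an `R`-module and faithfully
flat over `R`, with `A ⊗_R B ≅ B^n` as `B`-algebras, then `A` is a finite étale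
`R`-algebra. -/
theorem stmt17 {R A B : Type} [CommRing R] [IsNoetherianRing R] [CommRing A] [Algebra R A]
    [CommRing B] [Algebra R B] (n : ℕ)
    (hfinB : Module.Finite R B) (hff : Module.FaithfullyFlat R B)
    (e : (B ⊗[R] A) ≃ₐ[B] (Fin n → B)) :
    Algebra.Etale R A ∧ Module.Finite R A :=
  stmt17_general n hff e
end

section
/- Let A be a nonzero Noetherian commutative ring whose prime spectrum is connected, and let B₁ and B₂ be nonzero A-algebras, each finitely generated and flat as an A-module, such that the product algebra B₁ × B₂ is faithfully flat over A. Then the tensor product B₁ ⊗_A B₂ is nonzero. -/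
/-!
A finite flat module over a Noetherian ring is locally free, and its rank at the stalks is a
locally constant function on `Spec A`. On a connected spectrum that rank is constant, so a nonzero
such module has full support; by Nakayama it is then faithfully flat. Hence `B₁` is faithfully
flat over `A`, and tensoring the nonzero module `B₂` with it gives a nonzero module.
-/

open scoped TensorProduct

namespace Module

variable {R M : Type*} [CommRing R] [AddCommGroup M] [Module R M]

lemma smul_top_ne_top_of_mem_support [Module.Finite R M] {p : PrimeSpectrum R}
    (hp : p ∈ support R M) : p.asIdeal • (⊤ : Submodule R M) ≠ ⊤ := by
  intro htop
  obtain ⟨r, hr_sub_one, hr⟩ := Submodule.exists_sub_one_mem_and_smul_eq_zero_of_fg_of_le_smul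
    p.asIdeal ⊤ Module.Finite.fg_top htop.ge
  have hr_mem : r ∈ p.asIdeal :=
    mem_support_iff_of_finite.mp hp (mem_annihilator.mpr fun m ↦ hr m trivial)
  refine p.isPrime.ne_top ((Ideal.eq_top_iff_one _).mpr ?_)
  simpa using p.asIdeal.sub_mem hr_mem hr_sub_one

lemma FaithfullyFlat.of_support_eq_univ [Module.Finite R M] [Flat R M]
    (h : support R M = Set.univ) : FaithfullyFlat R M :=
  ⟨fun m hm ↦ smul_top_ne_top_of_mem_support (p := ⟨m, hm.isPrime⟩) (h ▸ trivial)⟩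

lemma support_eq_univ_of_connectedSpace [ConnectedSpace (PrimeSpectrum R)]
    [FinitePresentation R M] [Flat R M] [Nontrivial M] : support R M = Set.univ := by
  obtain ⟨q, hq⟩ := nonempty_support_of_nontrivial (R := R) (M := M)
  refine Set.eq_univ_of_forall fun p ↦ ?_
  rw [← rankAtStalk_pos_iff_mem_support] at hq ⊢
  rwa [isLocallyConstant_rankAtStalk.apply_eq_of_preconnectedSpace p q]

end Module

theorem stmt18_general {A B₁ B₂ : Type} [CommRing A] [IsNoetherianRing A]
    [ConnectedSpace (PrimeSpectrum A)]
    [CommRing B₁] [Algebra A B₁] [CommRing B₂] [Algebra A B₂]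
    [Nontrivial B₁] [Nontrivial B₂]
    (h₁fin : Module.Finite A B₁) (h₁flat : Module.Flat A B₁) :
    Nontrivial (B₁ ⊗[A] B₂) := by
  have : Module.FinitePresentation A B₁ := Module.finitePresentation_of_finite A B₁
  have : Module.FaithfullyFlat A B₁ :=
    .of_support_eq_univ Module.support_eq_univ_of_connectedSpace
  infer_instance

/-- Let `A` be a nonzero Noetherian commutative ring with connected prime spectrum, and
let `B₁`, `B₂` be nonzero `A`-algebras, each finitely generated and flat as an `A`-module,
such that `B₁ × B₂` is faithfully flat over `A`.  Then `B₁ ⊗_A B₂` is nonzero. -/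
theorem stmt18 {A B₁ B₂ : Type} [CommRing A] [Nontrivial A] [IsNoetherianRing A]
    [ConnectedSpace (PrimeSpectrum A)]
    [CommRing B₁] [Algebra A B₁] [CommRing B₂] [Algebra A B₂]
    [Nontrivial B₁] [Nontrivial B₂]
    (h₁fin : Module.Finite A B₁) (h₁flat : Module.Flat A B₁)
    (h₂fin : Module.Finite A B₂) (h₂flat : Module.Flat A B₂)
    (hff : Module.FaithfullyFlat A (B₁ × B₂)) :
    Nontrivial (B₁ ⊗[A] B₂) :=
  stmt18_general h₁fin h₁flat
end
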